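/- Let λ be a partition with at most n parts. If there exists a partition π (padded with zeros to n parts) with λ = 2π + (n, n−1, …, 1) componentwise, then ∫ s_λ(x_1,…,x_n) = (−1)^{n(n+1)/2} · s_π(x_1²,…,x_n²). If no such partition π exists, then ∫ s_λ(x_1,…,x_n) = 0. -/

import Mathlib

open MvPolynomial Finset

noncomputable section

abbrev Rn (n : ℕ) : Type := MvPolynomial (Fin n) ℚ
abbrev Kn (n : ℕ) : Type := FractionRing (Rn n)

/-- The canonical map from `R = ℚ[x_1,…,x_n]` to its fraction field. -/
def toK {n : ℕ} (f : Rn n) : Kn n := algebraMap (Rn n) (Kn n) f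

/-- The action of a sign vector `σ ∈ {±1}^n` (encoded by `σ : Fin n → Bool`,
with `true ↦ −1` and `false ↦ +1`) on `R`, by `x_i ↦ σ_i x_i`. -/
def sgnAct {n : ℕ} (σ : Fin n → Bool) : Rn n →ₐ[ℚ] Rn n :=
  aeval (fun i => if σ i then -X i else X i)

/-- `𝔯 = (−1)^D ∏_i (2x_i) ∏_{i<j} (x_i + x_j)` where `D = n(n+1)/2` (type `C_n`). -/
def frakrC (n : ℕ) : Rn n :=
  ((-1 : ℚ) ^ (n * (n + 1) / 2)) •
    ((∏ i : Fin n, (2 * X i)) *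
      ∏ p ∈ univ.filter (fun p : Fin n × Fin n => p.1 < p.2), (X p.1 + X p.2))

/-- `∫f = Σ_{σ∈{±1}^n} σ(f/𝔯)`, computed in the fraction field using
`σ(f/𝔯) = σ(f)/σ(𝔯)`. -/
def intC (n : ℕ) (f : Rn n) : Kn n :=
  ∑ σ : Fin n → Bool, toK (sgnAct σ f) / toK (sgnAct σ (frakrC n))

/-- `η = 2^{−N}(x_1+⋯+x_n)^N` where `N = n(n+1)/2 + 1`. -/
def etaC (n : ℕ) : Rn n :=
  (((2 : ℚ) ^ (n * (n + 1) / 2 + 1))⁻¹) • (∑ i : Fin n, X i) ^ (n * (n + 1) / 2 + 1)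

/-- `∂f = (1/2) Σ_i ∂f/∂x_i`. -/
def pdC {n : ℕ} (f : Rn n) : Rn n := (1 / 2 : ℚ) • ∑ i : Fin n, pderiv i f

/-- `∇(f) = ∫(η·∂f)`. -/
def nablaC (n : ℕ) (f : Rn n) : Kn n := intC n (etaC n * pdC f)

/-- The invariant ring `ℚ[p_1^{(2)},…,p_n^{(2)}]`, where `p_k^{(2)} = Σ_i x_i^{2k}`. -/
def algC (n : ℕ) : Subalgebra ℚ (Rn n) :=
  Algebra.adjoin ℚ (Set.range (fun k : Fin n => ∑ i : Fin n, X i ^ (2 * ((k : ℕ) + 1))))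

/-- The ideal `I` of the invariant ring consisting of elements with zero constant term. -/
def augC (n : ℕ) : Ideal ↥(algC n) :=
  RingHom.ker ((constantCoeff : Rn n →+* ℚ).comp (algC n).val.toRingHom)

/-- The alternant `a_α(y) = Σ_{ρ∈S_r} sgn(ρ) ∏_i y_{ρ(i)}^{α_i}`. -/
def alt {n : ℕ} (r : ℕ) (α : Fin r → ℕ) (y : Fin r → Rn n) : Rn n :=
  ∑ ρ : Equiv.Perm (Fin r), ((Equiv.Perm.sign ρ : ℤ)) • ∏ i, y (ρ i) ^ (α i)

/-- The Schur polynomial `s_λ(y) = a_{λ+δ_r}(y)/a_{δ_r}(y)` as an element of the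
fraction field. -/
def schurK {n : ℕ} (r : ℕ) (lam : Fin r → ℕ) (y : Fin r → Rn n) : Kn n :=
  toK (alt r (fun i => lam i + (r - 1 - (i : ℕ))) y) /
    toK (alt r (fun i => r - 1 - (i : ℕ)) y)

/-! Multiply numerator and denominator of each term of `∫ s_λ` by `σ(a_δ)`. The identity
`a_δ(x) 𝔯 = (−1)^D 2^n x_1⋯x_n a_δ(x²)` shows that `σ(a_δ 𝔯) = ε(σ) a_δ 𝔯` with
`ε(σ) = ∏ σ_i`, so `∫ s_λ = (Σ_σ ε(σ) σ(a_{λ+δ})) / (a_δ 𝔯)`. The twisted sum multiplies a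
monomial by `∏_i (1 − (−1)^{e_i})`, i.e. it kills it unless all exponents are odd and otherwise
scales it by `2^n`. All exponents of `a_{λ+δ}` are odd exactly when `λ = 2π + (n, …, 1)`, and then
`a_{λ+δ}(x) = x_1⋯x_n a_{π+δ}(x²)`, which cancels against the denominator. -/

def boolSign (b : Bool) : ℚ := if b then -1 else 1

def signChar {n : ℕ} (σ : Fin n → Bool) : ℚ := ∏ i, boolSign (σ i)

lemma boolSign_mul_self (b : Bool) : boolSign b * boolSign b = 1 := by
  cases b <;> norm_num [boolSign]

lemma signChar_mul_self {n : ℕ} (σ : Fin n → Bool) : signChar σ * signChar σ = 1 := by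
  rw [signChar, ← prod_mul_distrib]
  exact prod_eq_one fun i _ => boolSign_mul_self _

lemma sum_boolSign_pow_succ (e : ℕ) : ∑ b : Bool, boolSign b ^ (e + 1) = 1 - (-1) ^ e := by
  simp only [Fintype.sum_bool, boolSign, ↓reduceIte, Bool.false_eq_true, one_pow]
  ring

section sgnAct

variable {n : ℕ} (σ : Fin n → Bool)

lemma sgnAct_X (i : Fin n) : sgnAct σ (X i) = C (boolSign (σ i)) * X i := by
  cases h : σ i <;> simp [sgnAct, boolSign, h]

lemma sgnAct_C (a : ℚ) : sgnAct σ (C a) = C a := by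
  simp [sgnAct, algebraMap_eq]

lemma sgnAct_X_sq (i : Fin n) : sgnAct σ (X i ^ 2) = X i ^ 2 := by
  rw [map_pow, sgnAct_X, mul_pow, ← map_pow, sq (boolSign _), boolSign_mul_self, map_one, one_mul]

lemma sgnAct_prod_X_pow {ι : Type*} (t : Finset ι) (v : ι → Fin n) (e : ι → ℕ) :
    sgnAct σ (∏ i ∈ t, X (v i) ^ e i) =
      C (∏ i ∈ t, boolSign (σ (v i)) ^ e i) * ∏ i ∈ t, X (v i) ^ e i := by
  simp only [map_prod, map_pow, sgnAct_X, mul_pow, prod_mul_distrib]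

lemma sgnAct_prod_X : sgnAct σ (∏ i, X i) = C (signChar σ) * ∏ i, X i := by
  simpa [signChar] using sgnAct_prod_X_pow σ univ id (fun _ => 1)

end sgnAct

section alt

variable {n r : ℕ}

lemma map_alt {F : Type*} [FunLike F (Rn n) (Rn n)] [RingHomClass F (Rn n) (Rn n)] (f : F)
    (α : Fin r → ℕ) (y : Fin r → Rn n) : f (alt r α y) = alt r α (fun i => f (y i)) := by
  simp only [alt, map_sum, map_zsmul, map_prod, map_pow]

lemma alt_comp_perm (α : Fin r → ℕ) (y : Fin r → Rn n) (τ : Equiv.Perm (Fin r)) :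
    alt r (α ∘ τ) y = (Equiv.Perm.sign τ : ℤ) • alt r α y := by
  rw [alt, alt, smul_sum, ← Equiv.sum_comp (Equiv.mulRight τ)]
  refine sum_congr rfl fun ρ _ => ?_
  simp only [Equiv.coe_mulRight, Equiv.Perm.sign_mul, Equiv.Perm.coe_mul, Function.comp_apply,
    smul_smul, Units.val_mul, mul_comm]
  rw [Equiv.prod_comp τ (fun j => y (ρ j) ^ α j)]

lemma alt_id_eq_det_vandermonde (y : Fin r → Rn n) :
    alt r (fun i : Fin r => (i : ℕ)) y = (Matrix.vandermonde y).det := by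
  simp only [alt, Matrix.det_apply, Matrix.vandermonde_apply, Units.smul_def]

lemma alt_delta (y : Fin r → Rn n) :
    alt r (fun i => r - 1 - (i : ℕ)) y =
      (Equiv.Perm.sign (Fin.revPerm : Equiv.Perm (Fin r)) : ℤ) • (Matrix.vandermonde y).det := by
  have hrev : (fun i : Fin r => r - 1 - (i : ℕ)) ∘ Fin.revPerm = fun i : Fin r => (i : ℕ) := by
    funext i
    simp only [Function.comp_apply, Fin.revPerm_apply, Fin.val_rev]
    omega
  rw [← alt_id_eq_det_vandermonde, ← hrev, alt_comp_perm, smul_smul, ← Units.val_mul,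
    Int.units_mul_self, Units.val_one, one_smul]

lemma alt_delta_ne_zero {y : Fin r → Rn n} (hy : Function.Injective y) :
    alt r (fun i => r - 1 - (i : ℕ)) y ≠ 0 := by
  rw [alt_delta]
  exact smul_ne_zero (Units.ne_zero _) (Matrix.det_vandermonde_ne_zero_iff.mpr hy)

lemma alt_delta_sq (y : Fin r → Rn n) :
    alt r (fun i => r - 1 - (i : ℕ)) (fun i => y i ^ 2) =
      alt r (fun i => r - 1 - (i : ℕ)) y * ∏ i, ∏ j ∈ Ioi i, (y i + y j) := by
  rw [alt_delta, alt_delta, smul_mul_assoc, Matrix.det_vandermonde, Matrix.det_vandermonde,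
    ← prod_mul_distrib]
  congr 1
  refine prod_congr rfl fun i _ => ?_
  rw [← prod_mul_distrib]
  exact prod_congr rfl fun j _ => by ring

lemma alt_two_mul_add_one (μ : Fin r → ℕ) (y : Fin r → Rn n) :
    alt r (fun i => 2 * μ i + 1) y = (∏ j, y j) * alt r μ (fun j => y j ^ 2) := by
  rw [alt, alt, mul_sum]
  refine sum_congr rfl fun ρ _ => ?_
  rw [mul_smul_comm, ← Equiv.prod_comp ρ y, ← prod_mul_distrib]
  congr 1
  exact prod_congr rfl fun i _ => by ring

end alt

lemma prod_filter_lt_eq_prod_prod_Ioi {M : Type*} [CommMonoid M] {r : ℕ} (f : Fin r → Fin r → M) :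
    ∏ p ∈ univ.filter (fun p : Fin r × Fin r => p.1 < p.2), f p.1 p.2 =
      ∏ i, ∏ j ∈ Ioi i, f i j := by
  simp_rw [prod_filter, Fintype.prod_prod_type, ← filter_lt_eq_Ioi, prod_filter]

lemma X_sq_injective {n : ℕ} : Function.Injective (fun i : Fin n => (X i : Rn n) ^ 2) := by
  intro i j h
  simp only [X_pow_eq_monomial] at h
  exact Finsupp.single_left_injective two_ne_zero (monomial_left_injective one_ne_zero h)

section frakrC

variable (n : ℕ)

lemma alt_delta_mul_frakrC :
    alt n (fun i => n - 1 - (i : ℕ)) (fun i => X i) * frakrC n =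
      C ((-1) ^ (n * (n + 1) / 2) * 2 ^ n) *
        ((∏ i, X i) * alt n (fun i => n - 1 - (i : ℕ)) (fun i => X i ^ 2)) := by
  rw [alt_delta_sq, frakrC, smul_eq_C_mul, prod_filter_lt_eq_prod_prod_Ioi (fun i j => X i + X j),
    prod_mul_distrib, prod_const, card_univ, Fintype.card_fin]
  simp only [map_mul, map_pow, map_neg, map_one, map_ofNat]
  ring

lemma alt_delta_mul_frakrC_ne_zero :
    alt n (fun i => n - 1 - (i : ℕ)) (fun i => X i) * frakrC n ≠ 0 := by
  rw [alt_delta_mul_frakrC]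
  refine mul_ne_zero ?_ (mul_ne_zero ?_ (alt_delta_ne_zero X_sq_injective))
  · simp
  · exact prod_ne_zero_iff.mpr fun i _ => X_ne_zero i

lemma sgnAct_alt_delta_mul_frakrC (σ : Fin n → Bool) :
    sgnAct σ (alt n (fun i => n - 1 - (i : ℕ)) (fun i => X i) * frakrC n) =
      C (signChar σ) * (alt n (fun i => n - 1 - (i : ℕ)) (fun i => X i) * frakrC n) := by
  simp only [alt_delta_mul_frakrC, map_mul, sgnAct_C, sgnAct_prod_X, map_alt, sgnAct_X_sq]
  ring

end frakrC

section signSum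

variable {n : ℕ}

lemma sum_signChar_mul_prod_boolSign_pow (α : Fin n → ℕ) (ρ : Equiv.Perm (Fin n)) :
    ∑ σ : Fin n → Bool, signChar σ * ∏ i, boolSign (σ (ρ i)) ^ α i = ∏ i, (1 - (-1) ^ α i) := by
  have hσ : ∀ σ : Fin n → Bool, signChar σ * ∏ i, boolSign (σ (ρ i)) ^ α i =
      ∏ j, boolSign (σ j) ^ (α (ρ.symm j) + 1) := fun σ => by
    rw [signChar, ← Equiv.prod_comp ρ, ← prod_mul_distrib,
      ← Equiv.prod_comp ρ (fun j => boolSign (σ j) ^ (α (ρ.symm j) + 1))]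
    simp only [Equiv.symm_apply_apply, pow_succ, mul_comm]
  simp only [hσ, ← Fintype.prod_sum (fun j (b : Bool) => boolSign b ^ (α (ρ.symm j) + 1)),
    sum_boolSign_pow_succ]
  exact Equiv.prod_comp ρ.symm (fun i => 1 - (-1) ^ α i)

lemma sum_signChar_mul_sgnAct_alt (α : Fin n → ℕ) :
    ∑ σ : Fin n → Bool, C (signChar σ) * sgnAct σ (alt n α (fun i => X i)) =
      C (∏ i, (1 - (-1) ^ α i)) * alt n α (fun i => X i) := by
  simp only [alt, map_sum, map_zsmul, sgnAct_prod_X_pow, mul_sum, mul_smul_comm]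
  rw [sum_comm]
  refine sum_congr rfl fun ρ _ => ?_
  rw [← sum_signChar_mul_prod_boolSign_pow α ρ, map_sum, sum_mul, smul_sum]
  refine sum_congr rfl fun σ _ => ?_
  rw [map_mul, mul_assoc]

end signSum

section intC

variable {n : ℕ}

lemma toK_ne_zero {f : Rn n} (hf : f ≠ 0) : toK f ≠ 0 :=
  (map_ne_zero_iff _ (IsFractionRing.injective (Rn n) (Kn n))).mpr hf

lemma mul_eq_of_toK_eq_div {f g h : Rn n} (hh : h ≠ 0) (hf : toK f = toK g / toK h) :
    f * h = g :=
  IsFractionRing.injective (Rn n) (Kn n) <| by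
    rw [map_mul]
    exact (eq_div_iff (toK_ne_zero hh)).mp hf

lemma intC_eq_of_mul_alt_delta {s A : Rn n}
    (hsA : s * alt n (fun i => n - 1 - (i : ℕ)) (fun i => X i) = A) :
    intC n s = toK (∑ σ : Fin n → Bool, C (signChar σ) * sgnAct σ A) /
      toK (alt n (fun i => n - 1 - (i : ℕ)) (fun i => X i) * frakrC n) := by
  set a := alt n (fun i => n - 1 - (i : ℕ)) (fun i => (X i : Rn n))
  have hD : a * frakrC n ≠ 0 := alt_delta_mul_frakrC_ne_zero n
  simp only [intC, toK, map_sum, sum_div]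
  refine sum_congr rfl fun σ _ => ?_
  have hσA : sgnAct σ s * sgnAct σ a = sgnAct σ A := by rw [← map_mul, hsA]
  have hσD : sgnAct σ a * sgnAct σ (frakrC n) = C (signChar σ) * (a * frakrC n) := by
    rw [← map_mul, sgnAct_alt_delta_mul_frakrC]
  have hε : C (signChar σ) * C (signChar σ) = (1 : Rn n) := by
    rw [← map_mul, signChar_mul_self, map_one]
  have hσr : sgnAct σ (frakrC n) ≠ 0 := right_ne_zero_of_mul <| hσD ▸
    mul_ne_zero (left_ne_zero_of_mul_eq_one hε) hD
  refine (div_eq_div_iff (toK_ne_zero hσr) (toK_ne_zero hD)).mpr ?_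
  simp only [toK, ← map_mul]
  congr 1
  linear_combination (C (signChar σ) * sgnAct σ (frakrC n)) * hσA -
    (C (signChar σ) * sgnAct σ s) * hσD - (sgnAct σ s * (a * frakrC n)) * hε

lemma intC_eq_of_toK_eq_schurK {lam : Fin n → ℕ} {s : Rn n}
    (hs : toK s = schurK n lam (fun i => X i)) :
    intC n s = toK (C (∏ i, (1 - (-1) ^ (lam i + (n - 1 - (i : ℕ))))) *
        alt n (fun i => lam i + (n - 1 - (i : ℕ))) (fun i => X i)) /
      toK (alt n (fun i => n - 1 - (i : ℕ)) (fun i => X i) * frakrC n) := by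
  rw [intC_eq_of_mul_alt_delta (mul_eq_of_toK_eq_div (alt_delta_ne_zero X_injective) hs),
    sum_signChar_mul_sgnAct_alt]

lemma toK_C_two_pow_mul_alt_odd_div (μ : Fin n → ℕ) :
    toK (C (2 ^ n) * alt n (fun i => 2 * μ i + 1) (fun i => X i)) /
        toK (alt n (fun i => n - 1 - (i : ℕ)) (fun i => X i) * frakrC n) =
      (-1) ^ (n * (n + 1) / 2) * (toK (alt n μ (fun i => X i ^ 2)) /
        toK (alt n (fun i => n - 1 - (i : ℕ)) (fun i => X i ^ 2))) := by
  have hP : toK (∏ i : Fin n, (X i : Rn n)) ≠ 0 :=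
    toK_ne_zero (prod_ne_zero_iff.mpr fun i _ => X_ne_zero i)
  have hA := toK_ne_zero (alt_delta_ne_zero (X_sq_injective (n := n)))
  rw [alt_two_mul_add_one, alt_delta_mul_frakrC]
  simp only [toK, map_mul, map_pow, map_neg, map_one, map_ofNat] at hP hA ⊢
  field_simp
  rw [← pow_mul, pow_mul', neg_one_sq, one_pow, mul_one]

end intC

lemma exists_antitone_eq_two_mul_add_of_odd {n : ℕ} {lam : Fin n → ℕ} (hlam : Antitone lam)
    (hodd : ∀ i : Fin n, Odd (lam i + (n - 1 - (i : ℕ)))) :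
    ∃ π : Fin n → ℕ, Antitone π ∧ ∀ i, lam i = 2 * π i + (n - (i : ℕ)) := by
  cases n with
  | zero => exact ⟨0, antitone_const, fun i => i.elim0⟩
  | succ m =>
    -- `lam i + (m - i)` and `lam (i + 1) + (m - i - 1)` are both odd, so `lam (i + 1) < lam i`.
    have hgap : Antitone fun i : Fin (m + 1) => lam i + i := by
      refine Fin.antitone_iff_succ_le.mpr fun i => ?_
      have hle := hlam (Fin.castSucc_le_succ i)
      obtain ⟨a, ha⟩ := hodd i.succ
      obtain ⟨b, hb⟩ := hodd i.castSucc
      simp only [Fin.val_succ, Fin.val_castSucc] at ha hb ⊢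
      omega
    have hlast : m + 1 ≤ lam (Fin.last m) + m := by
      obtain ⟨a, ha⟩ := hodd (Fin.last m)
      simp only [Fin.val_last] at ha
      omega
    have hdiv : Monotone fun k : ℕ => (k - (m + 1)) / 2 := fun a b h =>
      Nat.div_le_div_right (Nat.sub_le_sub_right h _)
    refine ⟨_, hdiv.comp_antitone hgap, fun i => ?_⟩
    have hi := hgap (Fin.le_last i)
    obtain ⟨a, ha⟩ := hodd i
    simp only [Function.comp_apply, Fin.val_last] at hi ⊢
    omega

theorem stmt_5_general (n : ℕ) (lam : Fin n → ℕ) (hlam : Antitone lam)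
    (s : Rn n) (hs : toK s = schurK n lam (fun i => X i)) :
    (∀ π : Fin n → ℕ, Antitone π → (∀ i, lam i = 2 * π i + (n - (i : ℕ))) →
      intC n s = ((-1 : Kn n) ^ (n * (n + 1) / 2)) *
        schurK n π (fun i => X i ^ 2)) ∧
    ((¬ ∃ π : Fin n → ℕ, Antitone π ∧ ∀ i, lam i = 2 * π i + (n - (i : ℕ))) →
      intC n s = 0) := by
  rw [intC_eq_of_toK_eq_schurK hs]
  refine ⟨fun π _ hπ => ?_, fun hno => ?_⟩
  · have hα : (fun i : Fin n => lam i + (n - 1 - (i : ℕ))) =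
        fun i => 2 * (π i + (n - 1 - (i : ℕ))) + 1 := funext fun i => by
      have := hπ i
      omega
    have hodd : ∀ i : Fin n, Odd (lam i + (n - 1 - (i : ℕ))) := fun i => ⟨_, congrFun hα i⟩
    have hprod : ∏ i : Fin n, (1 - (-1 : ℚ) ^ (lam i + (n - 1 - (i : ℕ)))) = 2 ^ n := by
      norm_num [Odd.neg_one_pow, hodd]
    rw [hprod, hα, toK_C_two_pow_mul_alt_odd_div, schurK]
  · obtain ⟨i, hi⟩ : ∃ i : Fin n, Even (lam i + (n - 1 - (i : ℕ))) := by
      by_contra! h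
      exact hno (exists_antitone_eq_two_mul_add_of_odd hlam fun i => Nat.not_even_iff_odd.mp (h i))
    rw [prod_eq_zero (mem_univ i) (by rw [hi.neg_one_pow, sub_self])]
    simp [toK]

/-- for a partition `λ` with at most `n` parts:
if `λ = 2π + (n, n−1, …, 1)` for a partition `π` then
`∫ s_λ(x_1,…,x_n) = (−1)^{n(n+1)/2} s_π(x_1²,…,x_n²)`, and if no such `π` exists
then `∫ s_λ(x_1,…,x_n) = 0`. -/
theorem stmt_5 (n : ℕ) (hn : 2 ≤ n) (lam : Fin n → ℕ) (hlam : Antitone lam)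
    (s : Rn n) (hs : toK s = schurK n lam (fun i => X i)) :
    (∀ π : Fin n → ℕ, Antitone π → (∀ i, lam i = 2 * π i + (n - (i : ℕ))) →
      intC n s = ((-1 : Kn n) ^ (n * (n + 1) / 2)) *
        schurK n π (fun i => X i ^ 2)) ∧
    ((¬ ∃ π : Fin n → ℕ, Antitone π ∧ ∀ i, lam i = 2 * π i + (n - (i : ℕ))) →
      intC n s = 0) :=
  stmt_5_general n lam hlam s hs

end
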